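/- arXiv:0806.2768 — 4 statements merged into one kernel-verified Lean document; each statement's English description precedes it below -/
import Mathlib

section
/- There is an absolute constant M with the following property. Let N ≥ 1, let 0 < ε ≤ 1, and let s₁ and s₂ be independent random vectors, each of the form s = N^{−1/2}(v₁,…,v_N)ᵀ with v₁,…,v_N i.i.d. complex random variables satisfying E v₁ = 0, E|v₁|² = 1, |v₁| ≤ ε√N almost surely, and E|v₁|⁴ ≤ C. Then E |s₁* s₂|⁸ ≤ M (1 + C²) / N³. -/
/-!
Write `s₁* s₂ = N⁻¹ ∑_{i<N} Yᵢ` with `Yᵢ = conj vᵢ₁ · vᵢ₂`: these are independent, centred,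
bounded by `N`, and `E|Yᵢ|^{2j} = (E|v|^{2j})²`. For independent `S` and `Y` with `E Y = 0`,
expand `|S + Y|^{2p} = (|S|² + |Y|² + 2 Re (S conj Y))^p` for `p ≤ 4`: the term linear in
`Re (S conj Y)` integrates to zero, and Cauchy–Schwarz `(Re (S conj Y))² ≤ |S|²|Y|²` bounds the
others by products of even moments of `S` and `Y`. By induction this gives a Rosenthal-type
bound `E|∑_{i<k} Yᵢ|⁸ = O(k⁴ m₁⁴ + k³ m₁² m₂ + k² m₁ m₃ + k² m₂² + k m₄)` for
`m_j ≥ E|Yᵢ|^{2j}`. The truncation `|v| ≤ √N` gives `E|v|^{2j+2} ≤ N E|v|^{2j}`, so with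
`E|v|² = 1` and `E|v|⁴ ≤ C` every term is `O((1 + C²) N⁵)`, and dividing by `N⁸` leaves `N⁻³`.
-/

open MeasureTheory ProbabilityTheory Filter Matrix Finset
open scoped BigOperators Topology

noncomputable section

/-- The normalized signature vector `s_k = N^{-1/2}(v_{1k},…,v_{Nk})ᵀ`. -/
def sVec {Ω : Type*} (v : ℕ → ℕ → Ω → ℂ) (N k : ℕ) (ω : Ω) : Fin N → ℂ :=
  fun i => v i k ω / ((Real.sqrt N : ℝ) : ℂ)

open ComplexConjugate

section Polynomial

variable {x y r : ℝ}

lemma add_two_mul_sq_le (hr : r ^ 2 ≤ x * y) : (y + 2 * r) ^ 2 ≤ 6 * x * y + 3 * y ^ 2 := by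
  nlinarith [sq_nonneg (r - y)]

lemma add_two_mul_pow_three_le (hx : 0 ≤ x) (hy : 0 ≤ y) (hr : r ^ 2 ≤ x * y) :
    (y + 2 * r) ^ 3 ≤ 6 * x ^ 2 * y + 15 * x * y ^ 2 + 6 * y ^ 3 := by
  have h2 := add_two_mul_sq_le hr
  rcases le_or_gt (y + 2 * r) 0 with hneg | hpos
  · nlinarith [sq_nonneg (y + 2 * r), mul_nonneg (mul_nonneg hx hx) hy,
      mul_nonneg (mul_nonneg hx hy) hy, mul_nonneg (mul_nonneg hy hy) hy]
  · have hle : y + 2 * r ≤ x + 2 * y := by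
      nlinarith [sq_nonneg (x - y), sq_nonneg (x + y - 2 * r)]
    nlinarith [mul_le_mul hle h2 (sq_nonneg _) (by linarith)]

lemma add_add_two_mul_pow_two_le (hr : r ^ 2 ≤ x * y) :
    (x + y + 2 * r) ^ 2 ≤ x ^ 2 + 4 * x * r + 8 * x * y + 3 * y ^ 2 := by
  nlinarith [add_two_mul_sq_le hr]

lemma add_add_two_mul_pow_three_le (hx : 0 ≤ x) (hy : 0 ≤ y) (hr : r ^ 2 ≤ x * y) :
    (x + y + 2 * r) ^ 3 ≤
      x ^ 3 + 6 * x ^ 2 * r + 27 * x ^ 2 * y + 24 * x * y ^ 2 + 6 * y ^ 3 := by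
  nlinarith [add_two_mul_pow_three_le hx hy hr,
    mul_le_mul_of_nonneg_left (add_two_mul_sq_le hr) (by positivity : (0 : ℝ) ≤ 3 * x)]

lemma add_add_two_mul_pow_four_le (hx : 0 ≤ x) (hy : 0 ≤ y) (hr : r ^ 2 ≤ x * y) :
    (x + y + 2 * r) ^ 4 ≤ x ^ 4 + 8 * x ^ 3 * r + 64 * x ^ 3 * y + 114 * x ^ 2 * y ^ 2 +
      60 * x * y ^ 3 + 9 * y ^ 4 := by
  have h2 := add_two_mul_sq_le hr
  have h4 : (y + 2 * r) ^ 4 ≤ (6 * x * y + 3 * y ^ 2) ^ 2 := by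
    nlinarith [mul_self_le_mul_self (sq_nonneg (y + 2 * r)) h2]
  nlinarith [mul_le_mul_of_nonneg_left (add_two_mul_pow_three_le hx hy hr)
      (by positivity : (0 : ℝ) ≤ 4 * x),
    mul_le_mul_of_nonneg_left h2 (by positivity : (0 : ℝ) ≤ 6 * x ^ 2)]

lemma eighth_moment_polynomial_le {N C a b c : ℝ} (hN : 1 ≤ N) (ha : 0 ≤ a) (haN : a ≤ N)
    (haC : a ≤ C) (hb : 0 ≤ b) (hbC : b ≤ N * C) (hc : 0 ≤ c) (hcC : c ≤ N ^ 2 * C) :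
    576 * N ^ 4 + 1283 * N ^ 3 * a ^ 2 + 222 * N ^ 2 * b ^ 2 + 171 * N ^ 2 * a ^ 4 +
      9 * N * c ^ 2 ≤ 1300 * (1 + C ^ 2) * N ^ 5 := by
  have hC : 0 ≤ C := ha.trans haC
  have ha2 : a ^ 2 ≤ N * C := by rw [sq]; exact mul_le_mul haN haC ha (by positivity)
  have ha4 : a ^ 4 ≤ (N * C) ^ 2 := by
    rw [show a ^ 4 = (a ^ 2) ^ 2 by ring]; exact pow_le_pow_left₀ (by positivity) ha2 2
  have hb2 : b ^ 2 ≤ (N * C) ^ 2 := pow_le_pow_left₀ hb hbC 2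
  have hc2 : c ^ 2 ≤ (N ^ 2 * C) ^ 2 := pow_le_pow_left₀ hc hcC 2
  have hN4 : N ^ 4 ≤ N ^ 5 := pow_le_pow_right₀ hN (by norm_num)
  have hCsq : 2 * C ≤ 1 + C ^ 2 := by nlinarith [sq_nonneg (C - 1)]
  calc 576 * N ^ 4 + 1283 * N ^ 3 * a ^ 2 + 222 * N ^ 2 * b ^ 2 + 171 * N ^ 2 * a ^ 4 +
        9 * N * c ^ 2
      ≤ 576 * N ^ 4 + 1283 * N ^ 3 * (N * C) + 222 * N ^ 2 * (N * C) ^ 2 +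
        171 * N ^ 2 * (N * C) ^ 2 + 9 * N * (N ^ 2 * C) ^ 2 := by gcongr
    _ = (576 + 1283 * C + 393 * C ^ 2) * N ^ 4 + 9 * C ^ 2 * N ^ 5 := by ring
    _ ≤ (576 + 1283 * C + 393 * C ^ 2) * N ^ 5 + 9 * C ^ 2 * N ^ 5 := by gcongr
    _ = (576 + 1283 * C + 402 * C ^ 2) * N ^ 5 := by ring
    _ ≤ 1300 * (1 + C ^ 2) * N ^ 5 := by gcongr; linarith [sq_nonneg C]

end Polynomial

lemma star_sVec_dotProduct_sVec {Ω : Type*} (v : ℕ → ℕ → Ω → ℂ) (N : ℕ) (ω : Ω) :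
    star (sVec v N 0 ω) ⬝ᵥ sVec v N 1 ω = (∑ i ∈ range N, conj (v i 0 ω) * v i 1 ω) / N := by
  have hN : ((√N : ℝ) : ℂ) * ((√N : ℝ) : ℂ) = N := by
    rw [← Complex.ofReal_mul, Real.mul_self_sqrt (Nat.cast_nonneg N), Complex.ofReal_natCast]
  simp only [dotProduct, Pi.star_apply, sVec, RCLike.star_def, map_div₀, Complex.conj_ofReal,
    div_mul_div_comm, hN, ← Finset.sum_div]
  rw [Fin.sum_univ_eq_sum_range (fun i => conj (v i 0 ω) * v i 1 ω) N]

variable {Ω : Type*} [MeasurableSpace Ω] {P : Measure Ω}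

lemma integrable_comp₂_of_ae_norm_le {E₁ E₂ F : Type*} [NormedAddCommGroup E₁]
    [NormedAddCommGroup E₂] [ProperSpace E₁] [ProperSpace E₂] [NormedAddCommGroup F]
    [IsFiniteMeasure P] {X₁ : Ω → E₁} {X₂ : Ω → E₂} {B₁ B₂ : ℝ}
    (h₁ : AEStronglyMeasurable X₁ P) (h₂ : AEStronglyMeasurable X₂ P)
    (hB₁ : ∀ᵐ ω ∂P, ‖X₁ ω‖ ≤ B₁) (hB₂ : ∀ᵐ ω ∂P, ‖X₂ ω‖ ≤ B₂) {G : E₁ → E₂ → F}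
    (hG : Continuous fun z : E₁ × E₂ => G z.1 z.2) :
    Integrable (fun ω => G (X₁ ω) (X₂ ω)) P := by
  obtain ⟨K, hK⟩ := (isCompact_closedBall (0 : E₁ × E₂) (max B₁ B₂)).exists_bound_of_continuousOn
    hG.continuousOn
  refine Integrable.of_bound (hG.comp_aestronglyMeasurable (h₁.prodMk h₂)) K ?_
  filter_upwards [hB₁, hB₂] with ω hω₁ hω₂
  exact hK (X₁ ω, X₂ ω) (mem_closedBall_zero_iff.2 (max_le_max hω₁ hω₂))

lemma integral_norm_pow_add_two_le {E : Type*} [NormedAddCommGroup E] [IsFiniteMeasure P]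
    {X : Ω → E} {b : ℝ} (hX : AEStronglyMeasurable X P) (hb : ∀ᵐ ω ∂P, ‖X ω‖ ≤ b) (n : ℕ) :
    ∫ ω, ‖X ω‖ ^ (n + 2) ∂P ≤ b ^ 2 * ∫ ω, ‖X ω‖ ^ n ∂P := by
  have hint (k : ℕ) : Integrable (fun ω => ‖X ω‖ ^ k) P :=
    Integrable.of_bound (hX.norm.pow k) (b ^ k) (by
      filter_upwards [hb] with ω hω
      rw [Real.norm_of_nonneg (by positivity)]
      exact pow_le_pow_left₀ (norm_nonneg _) hω k)
  rw [← integral_const_mul]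
  refine integral_mono_ae (hint _) ((hint n).const_mul _) ?_
  filter_upwards [hb] with ω hω
  rw [pow_add, mul_comm]
  gcongr

section TwoIndependent

variable [IsFiniteMeasure P] {T Y : Ω → ℂ} {BT BY : ℝ}

lemma integral_norm_pow_mul_re_mul_conj_eq_zero (hT : Measurable T) (hY : Measurable Y)
    (hTb : ∀ᵐ ω ∂P, ‖T ω‖ ≤ BT) (hYb : ∀ᵐ ω ∂P, ‖Y ω‖ ≤ BY) (hind : IndepFun T Y P)
    (hY0 : ∫ ω, Y ω ∂P = 0) (n : ℕ) :
    ∫ ω, ‖T ω‖ ^ n * (T ω * conj (Y ω)).re ∂P = 0 := by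
  have hfac := (hind.comp (φ := fun t => ((‖t‖ ^ n : ℝ) : ℂ) * t) (ψ := conj)
    (by fun_prop) (by fun_prop)).integral_fun_mul_eq_mul_integral (by fun_prop) (by fun_prop)
  simp only [Function.comp_apply, integral_conj, hY0, map_zero, mul_zero] at hfac
  calc ∫ ω, ‖T ω‖ ^ n * (T ω * conj (Y ω)).re ∂P
      = ∫ ω, (((‖T ω‖ ^ n : ℝ) : ℂ) * T ω * conj (Y ω)).re ∂P := by
        simp only [mul_assoc, Complex.re_ofReal_mul]
    _ = (∫ ω, ((‖T ω‖ ^ n : ℝ) : ℂ) * T ω * conj (Y ω) ∂P).re :=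
        integral_re (integrable_comp₂_of_ae_norm_le hT.aestronglyMeasurable
          hY.aestronglyMeasurable hTb hYb (G := fun t y => ((‖t‖ ^ n : ℝ) : ℂ) * t * conj y)
          (by fun_prop))
    _ = 0 := by rw [hfac, Complex.zero_re]

/-- In `hpoly`, `x`, `y` and `r` stand for `‖T‖²`, `‖Y‖²` and `Re (T * conj Y)`, so that
`‖T + Y‖² = x + y + 2 r` and `r² ≤ x y`; the term linear in `r` integrates to zero. -/
lemma integral_norm_add_pow_le {p a k : ℕ} {c₀ : ℝ} (c : Fin k → ℝ) (e f : Fin k → ℕ)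
    (hpoly : ∀ x y r : ℝ, 0 ≤ x → 0 ≤ y → r ^ 2 ≤ x * y →
      (x + y + 2 * r) ^ p ≤ c₀ * x ^ a * r + ∑ i, c i * (x ^ e i * y ^ f i))
    (hT : Measurable T) (hY : Measurable Y) (hTb : ∀ᵐ ω ∂P, ‖T ω‖ ≤ BT)
    (hYb : ∀ᵐ ω ∂P, ‖Y ω‖ ≤ BY) (hind : IndepFun T Y P) (hY0 : ∫ ω, Y ω ∂P = 0) :
    ∫ ω, ‖T ω + Y ω‖ ^ (2 * p) ∂P ≤
      ∑ i, c i * ((∫ ω, ‖T ω‖ ^ (2 * e i) ∂P) * ∫ ω, ‖Y ω‖ ^ (2 * f i) ∂P) := by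
  have hint {G : ℂ → ℂ → ℝ} (hG : Continuous fun z : ℂ × ℂ => G z.1 z.2) :
      Integrable (fun ω => G (T ω) (Y ω)) P :=
    integrable_comp₂_of_ae_norm_le hT.aestronglyMeasurable hY.aestronglyMeasurable hTb hYb hG
  have hcross_int : Integrable (fun ω => ‖T ω‖ ^ (2 * a) * (T ω * conj (Y ω)).re) P :=
    hint (G := fun t y => ‖t‖ ^ (2 * a) * (t * conj y).re) (by fun_prop)
  have hprod_int (i : Fin k) : Integrable (fun ω => ‖T ω‖ ^ (2 * e i) * ‖Y ω‖ ^ (2 * f i)) P :=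
    hint (G := fun t y => ‖t‖ ^ (2 * e i) * ‖y‖ ^ (2 * f i)) (by fun_prop)
  have hsum_int : Integrable (fun ω => ∑ i, c i * (‖T ω‖ ^ (2 * e i) * ‖Y ω‖ ^ (2 * f i))) P :=
    integrable_finsetSum _ fun i _ => (hprod_int i).const_mul _
  have hprod (i : Fin k) : ∫ ω, ‖T ω‖ ^ (2 * e i) * ‖Y ω‖ ^ (2 * f i) ∂P =
      (∫ ω, ‖T ω‖ ^ (2 * e i) ∂P) * ∫ ω, ‖Y ω‖ ^ (2 * f i) ∂P :=
    (hind.comp (φ := fun t => ‖t‖ ^ (2 * e i)) (ψ := fun y => ‖y‖ ^ (2 * f i)) (by fun_prop)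
      (by fun_prop)).integral_fun_mul_eq_mul_integral (by fun_prop) (by fun_prop)
  have hpt (ω : Ω) : ‖T ω + Y ω‖ ^ (2 * p) ≤ c₀ * (‖T ω‖ ^ (2 * a) * (T ω * conj (Y ω)).re) +
      ∑ i, c i * (‖T ω‖ ^ (2 * e i) * ‖Y ω‖ ^ (2 * f i)) := by
    have hcs : (T ω * conj (Y ω)).re ^ 2 ≤ ‖T ω‖ ^ 2 * ‖Y ω‖ ^ 2 := by
      rw [← mul_pow, ← Complex.norm_conj (Y ω), ← norm_mul, sq_le_sq, abs_norm]
      exact Complex.abs_re_le_norm _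
    simpa only [pow_mul, Complex.sq_norm, Complex.normSq_add, mul_assoc] using
      hpoly _ _ _ (by positivity) (by positivity) hcs
  calc ∫ ω, ‖T ω + Y ω‖ ^ (2 * p) ∂P
      ≤ ∫ ω, c₀ * (‖T ω‖ ^ (2 * a) * (T ω * conj (Y ω)).re) +
          ∑ i, c i * (‖T ω‖ ^ (2 * e i) * ‖Y ω‖ ^ (2 * f i)) ∂P :=
        integral_mono (hint (G := fun t y => ‖t + y‖ ^ (2 * p)) (by fun_prop))
          ((hcross_int.const_mul _).add hsum_int) hpt
    _ = ∑ i, c i * ((∫ ω, ‖T ω‖ ^ (2 * e i) ∂P) * ∫ ω, ‖Y ω‖ ^ (2 * f i) ∂P) := by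
        rw [integral_add (hcross_int.const_mul _) hsum_int, integral_const_mul,
          integral_norm_pow_mul_re_mul_conj_eq_zero hT hY hTb hYb hind hY0, mul_zero, zero_add,
          integral_finsetSum _ fun i _ => (hprod_int i).const_mul _]
        simp only [integral_const_mul, hprod]

end TwoIndependent

lemma ProbabilityTheory.iIndepFun.indepFun_sum_range_pair {β γ : Type*} [MeasurableSpace β]
    [MeasurableSpace γ] [AddCommMonoid γ] [MeasurableAdd₂ γ] {f : ℕ × ℕ → Ω → β}
    (hf : iIndepFun f P) (hmeas : ∀ p, Measurable (f p)) {g : β → β → γ}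
    (hg : Measurable (Function.uncurry g)) (k : ℕ) :
    IndepFun (fun ω => ∑ i ∈ range k, g (f (i, 0) ω) (f (i, 1) ω))
      (fun ω => g (f (k, 0) ω) (f (k, 1) ω)) P := by
  set m : ℕ × ℕ → MeasurableSpace Ω := fun p => MeasurableSpace.comap (f p) inferInstance
  have hindep := indep_iSup_of_disjoint (fun p => (hmeas p).comap_le)
    ((iIndepFun_iff_iIndep _ f P).1 hf) (S := {p | p.1 < k}) (T := {p | p.1 = k})
    (Set.disjoint_left.2 fun p hS hT => by simp_all)
  have hrow (S : Set (ℕ × ℕ)) (i : ℕ) (h0 : (i, 0) ∈ S) (h1 : (i, 1) ∈ S) :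
      Measurable[⨆ p ∈ S, m p] fun ω => g (f (i, 0) ω) (f (i, 1) ω) := by
    have hp : ∀ p ∈ S, Measurable[⨆ p ∈ S, m p] (f p) := fun p hp =>
      Measurable.of_comap_le (le_iSup₂ (f := fun p _ => m p) p hp)
    exact hg.comp ((hp _ h0).prodMk (hp _ h1))
  rw [IndepFun_iff_Indep]
  refine indep_of_indep_of_le_right (indep_of_indep_of_le_left hindep ?_) ?_
  · exact Measurable.comap_le (Finset.measurable_sum _ fun i hi =>
      hrow _ i (by simpa using hi) (by simpa using hi))
  · exact Measurable.comap_le (hrow _ k rfl rfl)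

structure BddCenteredIncrements (P : Measure Ω) (B : ℝ) (Y : ℕ → Ω → ℂ) : Prop where
  measurable (k : ℕ) : Measurable (Y k)
  indepFun_sum (k : ℕ) : IndepFun (fun ω => ∑ i ∈ range k, Y i ω) (Y k) P
  norm_le (k : ℕ) : ∀ᵐ ω ∂P, ‖Y k ω‖ ≤ B
  integral_eq_zero (k : ℕ) : ∫ ω, Y k ω ∂P = 0

namespace BddCenteredIncrements

variable {Y : ℕ → Ω → ℂ} {B : ℝ}

lemma ae_norm_sum_range_le (h : BddCenteredIncrements P B Y) (k : ℕ) :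
    ∀ᵐ ω ∂P, ‖∑ i ∈ range k, Y i ω‖ ≤ k * B := by
  filter_upwards [ae_all_iff.2 h.norm_le] with ω hω
  calc ‖∑ i ∈ range k, Y i ω‖ ≤ ∑ i ∈ range k, ‖Y i ω‖ := norm_sum_le _ _
    _ ≤ ∑ _i ∈ range k, B := sum_le_sum fun i _ => hω i
    _ = k * B := by simp

lemma integral_norm_sum_range_succ_pow_le [IsFiniteMeasure P] (h : BddCenteredIncrements P B Y)
    {p a n : ℕ} {c₀ : ℝ} (c : Fin n → ℝ) (e f : Fin n → ℕ)
    (hpoly : ∀ x y r : ℝ, 0 ≤ x → 0 ≤ y → r ^ 2 ≤ x * y →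
      (x + y + 2 * r) ^ p ≤ c₀ * x ^ a * r + ∑ i, c i * (x ^ e i * y ^ f i)) (k : ℕ) :
    ∫ ω, ‖∑ i ∈ range (k + 1), Y i ω‖ ^ (2 * p) ∂P ≤
      ∑ i, c i * ((∫ ω, ‖∑ i ∈ range k, Y i ω‖ ^ (2 * e i) ∂P) * ∫ ω, ‖Y k ω‖ ^ (2 * f i) ∂P) := by
  simp only [sum_range_succ]
  exact integral_norm_add_pow_le c e f hpoly (Finset.measurable_sum _ fun i _ => h.measurable i)
    (h.measurable k) (h.ae_norm_sum_range_le k) (h.norm_le k) (h.indepFun_sum k)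
    (h.integral_eq_zero k)

variable [IsProbabilityMeasure P] {m : ℕ → ℝ}

lemma integral_norm_sum_range_sq_le (h : BddCenteredIncrements P B Y)
    (hm : ∀ k j, ∫ ω, ‖Y k ω‖ ^ (2 * j) ∂P ≤ m j) (k : ℕ) :
    ∫ ω, ‖∑ i ∈ range k, Y i ω‖ ^ 2 ∂P ≤ k * m 1 := by
  induction k with
  | zero => simp
  | succ k ih =>
    have step := h.integral_norm_sum_range_succ_pow_le (p := 1) (a := 0) (c₀ := 2) ![1, 1] ![1, 0]
      ![0, 1] (fun x y r _ _ _ => by simp only [Fin.sum_univ_two, Matrix.cons_val]; linarith) k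
    simp only [Fin.sum_univ_two, Matrix.cons_val, Nat.reduceMul, pow_zero, integral_const,
      probReal_univ, smul_eq_mul, one_mul, mul_one] at step
    push_cast
    linarith [hm k 1]

lemma integral_norm_sum_range_pow_four_le (h : BddCenteredIncrements P B Y)
    (hm : ∀ k j, ∫ ω, ‖Y k ω‖ ^ (2 * j) ∂P ≤ m j) (k : ℕ) :
    ∫ ω, ‖∑ i ∈ range k, Y i ω‖ ^ 4 ∂P ≤ 4 * k ^ 2 * m 1 ^ 2 + 3 * k * m 2 := by
  have hm0 (j : ℕ) : 0 ≤ m j := (integral_nonneg fun ω => by positivity).trans (hm 0 j)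
  have hm1 := hm0 1
  induction k with
  | zero => simp
  | succ k ih =>
    have step := h.integral_norm_sum_range_succ_pow_le (p := 2) (a := 1) (c₀ := 4) ![1, 8, 3]
      ![2, 1, 0] ![0, 1, 2] (fun x y r _ _ hr =>
        (add_add_two_mul_pow_two_le hr).trans_eq
          (by simp only [Fin.sum_univ_three, Matrix.cons_val]; ring)) k
    simp only [Fin.sum_univ_three, Matrix.cons_val, Nat.reduceMul, pow_zero, integral_const,
      probReal_univ, smul_eq_mul, one_mul, mul_one] at step
    have h2 := h.integral_norm_sum_range_sq_le hm k
    have hY2 : ∫ ω, ‖Y k ω‖ ^ 2 ∂P ≤ m 1 := by simpa using hm k 1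
    have hY4 : ∫ ω, ‖Y k ω‖ ^ 4 ∂P ≤ m 2 := by simpa using hm k 2
    calc _ ≤ _ := step
      _ ≤ 4 * k ^ 2 * m 1 ^ 2 + 3 * k * m 2 + 8 * (k * m 1 * m 1) + 3 * m 2 := by gcongr
      _ ≤ 4 * ↑(k + 1) ^ 2 * m 1 ^ 2 + 3 * ↑(k + 1) * m 2 := by
        rw [← sub_nonneg]; push_cast; ring_nf; positivity

lemma integral_norm_sum_range_pow_six_le (h : BddCenteredIncrements P B Y)
    (hm : ∀ k j, ∫ ω, ‖Y k ω‖ ^ (2 * j) ∂P ≤ m j) (k : ℕ) :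
    ∫ ω, ‖∑ i ∈ range k, Y i ω‖ ^ 6 ∂P ≤
      36 * k ^ 3 * m 1 ^ 3 + 53 * k ^ 2 * m 1 * m 2 + 6 * k * m 3 := by
  have hm0 (j : ℕ) : 0 ≤ m j := (integral_nonneg fun ω => by positivity).trans (hm 0 j)
  have hm1 := hm0 1
  have hm2 := hm0 2
  induction k with
  | zero => simp
  | succ k ih =>
    have step := h.integral_norm_sum_range_succ_pow_le (p := 3) (a := 2) (c₀ := 6) ![1, 27, 24, 6]
      ![3, 2, 1, 0] ![0, 1, 2, 3] (fun x y r hx hy hr =>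
        (add_add_two_mul_pow_three_le hx hy hr).trans_eq
          (by simp only [Fin.sum_univ_four, Matrix.cons_val]; ring)) k
    simp only [Fin.sum_univ_four, Matrix.cons_val, Nat.reduceMul, pow_zero, integral_const,
      probReal_univ, smul_eq_mul, one_mul, mul_one] at step
    have h2 := h.integral_norm_sum_range_sq_le hm k
    have h4 := h.integral_norm_sum_range_pow_four_le hm k
    have hY2 : ∫ ω, ‖Y k ω‖ ^ 2 ∂P ≤ m 1 := by simpa using hm k 1
    have hY4 : ∫ ω, ‖Y k ω‖ ^ 4 ∂P ≤ m 2 := by simpa using hm k 2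
    have hY6 : ∫ ω, ‖Y k ω‖ ^ 6 ∂P ≤ m 3 := by simpa using hm k 3
    calc _ ≤ _ := step
      _ ≤ 36 * k ^ 3 * m 1 ^ 3 + 53 * k ^ 2 * m 1 * m 2 + 6 * k * m 3 +
          27 * ((4 * k ^ 2 * m 1 ^ 2 + 3 * k * m 2) * m 1) + 24 * (k * m 1 * m 2) + 6 * m 3 := by
        gcongr
      _ ≤ 36 * ↑(k + 1) ^ 3 * m 1 ^ 3 + 53 * ↑(k + 1) ^ 2 * m 1 * m 2 + 6 * ↑(k + 1) * m 3 := by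
        rw [← sub_nonneg]; push_cast; ring_nf; positivity

lemma integral_norm_sum_range_pow_eight_le (h : BddCenteredIncrements P B Y)
    (hm : ∀ k j, ∫ ω, ‖Y k ω‖ ^ (2 * j) ∂P ≤ m j) (k : ℕ) :
    ∫ ω, ‖∑ i ∈ range k, Y i ω‖ ^ 8 ∂P ≤ 576 * k ^ 4 * m 1 ^ 4 + 1283 * k ^ 3 * m 1 ^ 2 * m 2 +
      222 * k ^ 2 * m 1 * m 3 + 171 * k ^ 2 * m 2 ^ 2 + 9 * k * m 4 := by
  have hm0 (j : ℕ) : 0 ≤ m j := (integral_nonneg fun ω => by positivity).trans (hm 0 j)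
  have hm1 := hm0 1
  have hm2 := hm0 2
  have hm3 := hm0 3
  induction k with
  | zero => simp
  | succ k ih =>
    have step := h.integral_norm_sum_range_succ_pow_le (p := 4) (a := 3) (c₀ := 8)
      ![1, 64, 114, 60, 9] ![4, 3, 2, 1, 0] ![0, 1, 2, 3, 4] (fun x y r hx hy hr =>
        (add_add_two_mul_pow_four_le hx hy hr).trans_eq
          (by simp only [Fin.sum_univ_five, Matrix.cons_val]; ring)) k
    simp only [Fin.sum_univ_five, Matrix.cons_val, Nat.reduceMul, pow_zero, integral_const,
      probReal_univ, smul_eq_mul, one_mul, mul_one] at step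
    have h2 := h.integral_norm_sum_range_sq_le hm k
    have h4 := h.integral_norm_sum_range_pow_four_le hm k
    have h6 := h.integral_norm_sum_range_pow_six_le hm k
    have hY2 : ∫ ω, ‖Y k ω‖ ^ 2 ∂P ≤ m 1 := by simpa using hm k 1
    have hY4 : ∫ ω, ‖Y k ω‖ ^ 4 ∂P ≤ m 2 := by simpa using hm k 2
    have hY6 : ∫ ω, ‖Y k ω‖ ^ 6 ∂P ≤ m 3 := by simpa using hm k 3
    have hY8 : ∫ ω, ‖Y k ω‖ ^ 8 ∂P ≤ m 4 := by simpa using hm k 4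
    calc _ ≤ _ := step
      _ ≤ 576 * k ^ 4 * m 1 ^ 4 + 1283 * k ^ 3 * m 1 ^ 2 * m 2 + 222 * k ^ 2 * m 1 * m 3 +
            171 * k ^ 2 * m 2 ^ 2 + 9 * k * m 4 +
          64 * ((36 * k ^ 3 * m 1 ^ 3 + 53 * k ^ 2 * m 1 * m 2 + 6 * k * m 3) * m 1) +
          114 * ((4 * k ^ 2 * m 1 ^ 2 + 3 * k * m 2) * m 2) + 60 * (k * m 1 * m 3) + 9 * m 4 := by
        gcongr
      _ ≤ 576 * ↑(k + 1) ^ 4 * m 1 ^ 4 + 1283 * ↑(k + 1) ^ 3 * m 1 ^ 2 * m 2 +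
          222 * ↑(k + 1) ^ 2 * m 1 * m 3 + 171 * ↑(k + 1) ^ 2 * m 2 ^ 2 + 9 * ↑(k + 1) * m 4 := by
        rw [← sub_nonneg]; push_cast; ring_nf; positivity

end BddCenteredIncrements

section Entries

variable {v : ℕ → ℕ → Ω → ℂ}

lemma bddCenteredIncrements_conj_mul {b : ℝ} (hmeas : ∀ i j, Measurable (v i j))
    (hind : iIndepFun (fun q : ℕ × ℕ => v q.1 q.2) P) (hb : ∀ i j, ∀ᵐ ω ∂P, ‖v i j ω‖ ≤ b)
    (h0 : ∀ i j, ∫ ω, v i j ω ∂P = 0) :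
    BddCenteredIncrements P (b ^ 2) fun i ω => conj (v i 0 ω) * v i 1 ω where
  measurable k := by fun_prop
  indepFun_sum k := hind.indepFun_sum_range_pair (fun q => hmeas q.1 q.2)
    (g := fun a c => conj a * c) (by fun_prop) k
  norm_le k := by
    filter_upwards [hb k 0, hb k 1] with ω h₀ h₁
    rw [norm_mul, Complex.norm_conj, sq]
    exact mul_le_mul h₀ h₁ (norm_nonneg _) ((norm_nonneg _).trans h₀)
  integral_eq_zero k := by
    have hpair : IndepFun (v k 0) (v k 1) P := hind.indepFun (i := (k, 0)) (j := (k, 1)) (by simp)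
    have hconj : IndepFun (fun ω => conj (v k 0 ω)) (v k 1) P :=
      hpair.comp (φ := conj) (ψ := id) (by fun_prop) measurable_id
    rw [hconj.integral_fun_mul_eq_mul_integral (by fun_prop) (by fun_prop), h0 k 1, mul_zero]

lemma integral_norm_conj_mul_pow (hmeas : ∀ i j, Measurable (v i j))
    (hind : iIndepFun (fun q : ℕ × ℕ => v q.1 q.2) P)
    (hid : ∀ i j, IdentDistrib (v i j) (v 0 0) P P) (k n : ℕ) :
    ∫ ω, ‖conj (v k 0 ω) * v k 1 ω‖ ^ n ∂P = (∫ ω, ‖v 0 0 ω‖ ^ n ∂P) ^ 2 := by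
  have hpair : IndepFun (v k 0) (v k 1) P := hind.indepFun (i := (k, 0)) (j := (k, 1)) (by simp)
  have hmom (j : ℕ) : ∫ ω, ‖v k j ω‖ ^ n ∂P = ∫ ω, ‖v 0 0 ω‖ ^ n ∂P :=
    ((hid k j).comp (measurable_norm.pow_const n)).integral_eq
  have hnorm : IndepFun (fun ω => ‖v k 0 ω‖ ^ n) (fun ω => ‖v k 1 ω‖ ^ n) P :=
    hpair.comp (φ := fun z => ‖z‖ ^ n) (ψ := fun z => ‖z‖ ^ n) (by fun_prop) (by fun_prop)
  simp only [norm_mul, Complex.norm_conj, mul_pow]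
  rw [hnorm.integral_fun_mul_eq_mul_integral (by fun_prop) (by fun_prop), hmom, hmom, sq]

end Entries

/-- The eighth-moment bound (5.27) of the paper: there is an absolute constant
`M` such that for truncated i.i.d. entries (`|v₁| ≤ ε√N` a.s., `E|v₁|⁴ ≤ C`)
and independent vectors `s₁ = sVec v N 0`, `s₂ = sVec v N 1`,
`E|s₁* s₂|⁸ ≤ M (1 + C²)/N³`. -/
theorem eighth_moment_inner_product_bound :
    ∃ M : ℝ, 0 < M ∧
      ∀ (N : ℕ), 1 ≤ N → ∀ (ε C : ℝ), 0 < ε → ε ≤ 1 →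
      ∀ (Ω : Type) [MeasurableSpace Ω] (P : Measure Ω) [IsProbabilityMeasure P]
        (v : ℕ → ℕ → Ω → ℂ),
        (∀ i j, Measurable (v i j)) →
        iIndepFun
          (fun q : ℕ × ℕ => v q.1 q.2) P →
        (∀ i j, IdentDistrib (v i j) (v 0 0) P P) →
        (∫ ω, v 0 0 ω ∂P = 0) →
        (∫ ω, ‖v 0 0 ω‖^2 ∂P = 1) →
        (∀ᵐ ω ∂P, ‖v 0 0 ω‖ ≤ ε * Real.sqrt N) →
        (∫ ω, ‖v 0 0 ω‖^4 ∂P ≤ C) →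
        ∫ ω, ‖star (sVec v N 0 ω) ⬝ᵥ sVec v N 1 ω‖^8 ∂P
          ≤ M * (1 + C^2) / (N : ℝ)^3 := by
  refine ⟨1300, by norm_num, fun N hN ε C _ hε Ω _ P _ v hmeas hind hid hmean hvar hbdd hfourth =>
    ?_⟩
  have hb (i j : ℕ) : ∀ᵐ ω ∂P, ‖v i j ω‖ ≤ √N := by
    refine (hid i j).symm.ae_snd (p := fun z => ‖z‖ ≤ √N)
      (measurableSet_le measurable_norm measurable_const) ?_
    filter_upwards [hbdd] with ω hω
    exact hω.trans (mul_le_of_le_one_left (Real.sqrt_nonneg _) hε)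
  have hwalk := (bddCenteredIncrements_conj_mul hmeas hind hb fun i j =>
    (hid i j).integral_eq.trans hmean).integral_norm_sum_range_pow_eight_le
    (fun k j => (integral_norm_conj_mul_pow hmeas hind hid k (2 * j)).le) N
  have hstep (n : ℕ) : ∫ ω, ‖v 0 0 ω‖ ^ (n + 2) ∂P ≤ N * ∫ ω, ‖v 0 0 ω‖ ^ n ∂P := by
    simpa [Real.sq_sqrt] using
      integral_norm_pow_add_two_le (hmeas 0 0).aestronglyMeasurable (hb 0 0) n
  have hμ4 : ∫ ω, ‖v 0 0 ω‖ ^ 4 ∂P ≤ N := by simpa [hvar] using hstep 2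
  have hμ6 : ∫ ω, ‖v 0 0 ω‖ ^ 6 ∂P ≤ N * C := (hstep 4).trans (by gcongr)
  have hμ8 : ∫ ω, ‖v 0 0 ω‖ ^ 8 ∂P ≤ N ^ 2 * C :=
    (hstep 6).trans (by rw [sq, mul_assoc]; gcongr)
  simp only [Nat.reduceMul, hvar, one_pow, mul_one, ← pow_mul] at hwalk
  simp_rw [star_sVec_dotProduct_sVec, norm_div, div_pow, Complex.norm_natCast]
  rw [integral_div, div_le_div_iff₀ (by positivity) (by positivity)]
  have h8 := hwalk.trans (eighth_moment_polynomial_le (by exact_mod_cast hN)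
    (integral_nonneg fun _ => by positivity) hμ4 hfourth
    (integral_nonneg fun _ => by positivity) hμ6 (integral_nonneg fun _ => by positivity) hμ8)
  calc _ ≤ 1300 * (1 + C ^ 2) * N ^ 5 * N ^ 3 := by gcongr
    _ = 1300 * (1 + C ^ 2) * N ^ 8 := by ring

end
end

section
/- Let K=K(N) with N/K → c > 0 and let p₁, …, p_K ∈ [0, M̄] be deterministic numbers (depending on N) with (1/K)∑_{k=1}^K p_k → m₁ as N → ∞. Then ∑_{k=1}^K p_k ( s_k* s_k − 1 )² converges in probability, as N → ∞, to (E|v₁₁|⁴ − 1) m₁ / c. -/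
/-!
Write `Y_ik = |v_ik|² - 1`, so that `s_k* s_k - 1 = N⁻¹ ∑_i Y_ik` is a normalized sum of i.i.d.
centered variables with variance `σ² = E|v₁₁|⁴ - 1`. Hence `E (s_k* s_k - 1)² = σ² / N`, and by
the fourth-moment computation for independent sums, `E (s_k* s_k - 1)⁴ = O(1/N²)` (this is
where `E|v₁₁|⁸ < ∞` enters). The `K` summands are independent across `k`, so the sum has mean
`σ² (K/N) · K⁻¹ ∑ p_k → σ² m₁ / c` and variance `O(K/N²) → 0`; Chebyshev's inequality concludes.
-/

open MeasureTheory ProbabilityTheory Filter Matrix Finset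
open scoped BigOperators ENNReal NNReal Topology

noncomputable section

/-- The matrix `R_k = S_k P_k S_k* + σ² I`, where `S_k` has columns `s_j`,
`j ≠ k`, `j < K`, and `P_k = diag(p_j, j ≠ k)`; written as a sum of rank-one
matrices `∑_{j ≠ k} p_j s_j s_j* + σ² I`. -/
def RmatP {Ω : Type*} (v : ℕ → ℕ → Ω → ℂ) (p : ℕ → ℝ) (σ : ℝ) (N K k : ℕ)
    (ω : Ω) : Matrix (Fin N) (Fin N) ℂ :=
  (∑ j ∈ (Finset.range K).erase k,
      ((p j : ℂ)) • Matrix.vecMulVec (sVec v N j ω) (star (sVec v N j ω)))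
    + ((σ : ℂ)^2) • (1 : Matrix (Fin N) (Fin N) ℂ)

/-- The real quadratic form `s_k* M s_k`. -/
def qf {Ω : Type*} (v : ℕ → ℕ → Ω → ℂ) (N k : ℕ) (M : Matrix (Fin N) (Fin N) ℂ)
    (ω : Ω) : ℝ :=
  (star (sVec v N k ω) ⬝ᵥ M.mulVec (sVec v N k ω)).re

/-- `s_k* s_k` (a real number). -/
def sNormSq {Ω : Type*} (v : ℕ → ℕ → Ω → ℂ) (N k : ℕ) (ω : Ω) : ℝ :=
  (star (sVec v N k ω) ⬝ᵥ sVec v N k ω).re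

section Moments

variable {Ω : Type*} [MeasurableSpace Ω] {μ : Measure Ω}

theorem MeasureTheory.MemLp.sq {f : Ω → ℝ} (hf : MemLp f 4 μ) : MemLp (fun ω => f ω ^ 2) 2 μ :=
  (memLp_two_iff_integrable_sq (hf.aestronglyMeasurable.pow 2)).mpr <| by
    simpa [← pow_mul, Even.pow_abs (by decide : Even 4)] using
      hf.integrable_norm_pow (p := 4) (by norm_num)

theorem MeasureTheory.memLp_norm_sq_iff {E : Type*} [NormedAddCommGroup E] {f : Ω → E}
    (hf : AEStronglyMeasurable f μ) {p : ℕ} (hp : p ≠ 0) :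
    MemLp (fun ω => ‖f ω‖ ^ 2) p μ ↔ Integrable (fun ω => ‖f ω‖ ^ (2 * p)) μ := by
  rw [← integrable_norm_rpow_iff (f := fun ω => ‖f ω‖ ^ 2) (hf.norm.pow 2) (by simpa using hp)
    (by simp)]
  simp [pow_mul]

section FiniteMeasure

variable [IsFiniteMeasure μ]

theorem MeasureTheory.MemLp.integrable_pow_of_le {f : Ω → ℝ} {m n : ℕ}
    (hf : MemLp f n μ) (hmn : m ≤ n) : Integrable (fun ω => f ω ^ m) μ := by
  refine (hf.mono_exponent (by exact_mod_cast hmn)).integrable_norm_pow'.mono'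
    (hf.aestronglyMeasurable.pow m) (ae_of_all _ fun ω => ?_)
  simp [norm_pow]

theorem ProbabilityTheory.IndepFun.integral_add_pow {X Y : Ω → ℝ} {n : ℕ}
    (hXY : IndepFun X Y μ) (hX : MemLp X n μ) (hY : MemLp Y n μ) :
    ∫ ω, (X ω + Y ω) ^ n ∂μ
      = ∑ m ∈ range (n + 1), (∫ ω, X ω ^ m ∂μ) * (∫ ω, Y ω ^ (n - m) ∂μ) * n.choose m := by
  have hpow (m : ℕ) := hXY.comp (measurable_id.pow_const m) (measurable_id.pow_const (n - m))
  simp_rw [add_pow]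
  rw [integral_finsetSum _ fun m hm => ?_]
  · refine Finset.sum_congr rfl fun m _ => ?_
    rw [integral_mul_const]
    congr 1
    exact (hpow m).integral_fun_mul_eq_mul_integral (hX.aestronglyMeasurable.pow m)
      (hY.aestronglyMeasurable.pow _)
  · have hm := Finset.mem_range_succ_iff.mp hm
    exact ((hpow m).integrable_mul (hX.integrable_pow_of_le hm)
      (hY.integrable_pow_of_le (Nat.sub_le n m))).mul_const _

theorem tendstoInMeasure_const_of_tendsto_variance {ι : Type*} {l : Filter ι}
    {f : ι → Ω → ℝ} {a : ℝ} (hf : ∀ᶠ i in l, MemLp (f i) 2 μ)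
    (hmean : Tendsto (fun i => μ[f i]) l (𝓝 a))
    (hvar : Tendsto (fun i => variance (f i) μ) l (𝓝 0)) :
    TendstoInMeasure μ f l (fun _ => a) := by
  rw [tendstoInMeasure_iff_dist]
  intro ε hε
  have hbound : Tendsto (fun i => ENNReal.ofReal (variance (f i) μ / (ε / 2) ^ 2)) l (𝓝 0) := by
    simpa using ENNReal.tendsto_ofReal (hvar.div_const ((ε / 2) ^ 2))
  refine tendsto_of_tendsto_of_tendsto_of_le_of_le' tendsto_const_nhds hbound
    (Eventually.of_forall fun i => zero_le) ?_
  filter_upwards [hf, Metric.tendsto_nhds.mp hmean (ε / 2) (half_pos hε)] with i hfi hi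
  refine le_trans (measure_mono fun ω hω => ?_) (meas_ge_le_variance_div_sq hfi (half_pos hε))
  simp only [Set.mem_ofPred_eq, Real.dist_eq] at hω hi ⊢
  linarith [abs_sub_le (f i ω) μ[f i] a]

end FiniteMeasure

variable [IsProbabilityMeasure μ] {ι : Type*} {X : ι → Ω → ℝ}

theorem integral_sum_sq_of_iIndepFun (hind : iIndepFun X μ) (hmeas : ∀ i, Measurable (X i))
    (hL2 : ∀ i, MemLp (X i) 2 μ) (h1 : ∀ i, ∫ ω, X i ω ∂μ = 0) {σ2 : ℝ}
    (h2 : ∀ i, ∫ ω, X i ω ^ 2 ∂μ = σ2) (s : Finset ι) :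
    ∫ ω, (∑ i ∈ s, X i ω) ^ 2 ∂μ = #s * σ2 := by
  classical
  induction s using Finset.induction_on with
  | empty => simp
  | insert a s ha ih =>
    have hS : ∫ ω, ∑ i ∈ s, X i ω ∂μ = 0 := by
      rw [integral_finsetSum _ fun i _ => (hL2 i).integrable one_le_two]; simp [h1]
    have := (hind.indepFun_finsetSum_of_notMem hmeas ha).integral_add_pow
      (memLp_finsetSum' s fun i _ => hL2 i) (hL2 a)
    simp only [Finset.sum_apply] at this
    simp only [Finset.sum_insert ha, add_comm (X a _), this, Finset.sum_range_succ,
      Finset.card_insert_of_notMem ha, ih, h2]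
    simp only [range_zero, sum_empty, pow_zero, integral_const, probReal_univ, smul_eq_mul,
      mul_one, one_mul, Nat.choose_zero_right, Nat.cast_one, zero_add, pow_one, hS,
      Nat.add_one_sub_one, zero_mul, Nat.choose_succ_self_right, Nat.reduceAdd, Nat.cast_ofNat,
      add_zero, tsub_self, Nat.choose_self, Nat.cast_add]
    ring

theorem integral_sum_pow_four_of_iIndepFun (hind : iIndepFun X μ)
    (hmeas : ∀ i, Measurable (X i)) (hL4 : ∀ i, MemLp (X i) 4 μ) (h1 : ∀ i, ∫ ω, X i ω ∂μ = 0)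
    {σ2 m4 : ℝ} (h2 : ∀ i, ∫ ω, X i ω ^ 2 ∂μ = σ2) (h4 : ∀ i, ∫ ω, X i ω ^ 4 ∂μ = m4)
    (s : Finset ι) :
    ∫ ω, (∑ i ∈ s, X i ω) ^ 4 ∂μ = #s * m4 + 3 * #s * (#s - 1) * σ2 ^ 2 := by
  classical
  have hL2 i : MemLp (X i) 2 μ := (hL4 i).mono_exponent (by norm_num)
  induction s using Finset.induction_on with
  | empty => simp
  | insert a s ha ih =>
    have hS : ∫ ω, ∑ i ∈ s, X i ω ∂μ = 0 := by
      rw [integral_finsetSum _ fun i _ => (hL4 i).integrable (by norm_num)]; simp [h1]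
    have := (hind.indepFun_finsetSum_of_notMem hmeas ha).integral_add_pow
      (memLp_finsetSum' s fun i _ => hL4 i) (hL4 a)
    simp only [Finset.sum_apply] at this
    simp only [Finset.sum_insert ha, add_comm (X a _), this, Finset.sum_range_succ,
      Finset.card_insert_of_notMem ha, ih, h2, h4,
      integral_sum_sq_of_iIndepFun hind hmeas hL2 h1 h2 s]
    simp only [range_zero, sum_empty, pow_zero, integral_const, probReal_univ, smul_eq_mul,
      mul_one, one_mul, Nat.choose, Nat.cast_one, zero_add, pow_one, hS, Nat.add_one_sub_one,
      zero_mul, add_zero, Nat.reduceAdd, Nat.cast_ofNat, Nat.reduceSub, h1, mul_zero, tsub_self,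
      Nat.cast_add, add_sub_cancel_right]
    ring

end Moments

theorem tendsto_sum_div_of_tendsto_average {K : ℕ → ℕ} {c m : ℝ} {p : ℕ → ℕ → ℝ} (hc : c ≠ 0)
    (hK : Tendsto (fun N : ℕ => (N : ℝ) / K N) atTop (𝓝 c))
    (hm : Tendsto (fun N : ℕ => 1 / (K N : ℝ) * ∑ k ∈ range (K N), p N k) atTop (𝓝 m)) :
    Tendsto (fun N : ℕ => (∑ k ∈ range (K N), p N k) / N) atTop (𝓝 (m / c)) := by
  have hKN : Tendsto (fun N : ℕ => (K N : ℝ) / N) atTop (𝓝 c⁻¹) := by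
    simpa using hK.inv₀ hc
  refine (hm.mul hKN).congr' ?_
  filter_upwards [hK.eventually_ne hc] with N hN
  have hK0 : (K N : ℝ) ≠ 0 := fun h => hN (by simp [h])
  field_simp

theorem tendsto_div_sq_of_tendsto_div {K : ℕ → ℕ} {c : ℝ} (hc : c ≠ 0)
    (hK : Tendsto (fun N : ℕ => (N : ℝ) / K N) atTop (𝓝 c)) :
    Tendsto (fun N : ℕ => (K N : ℝ) / N ^ 2) atTop (𝓝 0) := by
  have := (hK.inv₀ hc).mul tendsto_one_div_atTop_nhds_zero_nat
  rw [mul_zero] at this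
  refine this.congr fun N => ?_
  rw [inv_div, div_mul_div_comm, mul_one, sq]

section Model

variable {Ω : Type*} {v : ℕ → ℕ → Ω → ℂ}

theorem sNormSq_eq (N k : ℕ) (ω : Ω) :
    sNormSq v N k ω = (∑ i : Fin N, ‖v i k ω‖ ^ 2) / N := by
  simp only [sNormSq, sVec, dotProduct, Complex.re_sum, Finset.sum_div, Pi.star_apply,
    Complex.star_def, ← Complex.normSq_eq_conj_mul_self, Complex.ofReal_re,
    Complex.normSq_eq_norm_sq, norm_div, Complex.norm_real, div_pow, Real.norm_eq_abs, sq_abs,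
    Real.sq_sqrt (Nat.cast_nonneg N)]

theorem sNormSq_sub_one_eq {N : ℕ} (hN : N ≠ 0) (k : ℕ) (ω : Ω) :
    sNormSq v N k ω - 1 = (∑ i : Fin N, (‖v i k ω‖ ^ 2 - 1)) / N := by
  rw [sNormSq_eq, Finset.sum_sub_distrib, sub_div]
  simp [hN]

variable [MeasurableSpace Ω] {P : Measure Ω}

theorem iIndepFun_column (hindep : iIndepFun (fun q : ℕ × ℕ => v q.1 q.2) P) {N : ℕ} (k : ℕ)
    {β : Type*} [MeasurableSpace β] {g : ℂ → β} (hg : Measurable g) :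
    iIndepFun (fun (i : Fin N) ω => g (v i k ω)) P :=
  (hindep.precomp (g := fun i : Fin N => ((i : ℕ), k))
    fun _ _ h => Fin.ext (Prod.ext_iff.mp h).1).comp (fun _ => g) fun _ => hg

theorem indepFun_sNormSq (hmeas : ∀ i j, Measurable (v i j))
    (hindep : iIndepFun (fun q : ℕ × ℕ => v q.1 q.2) P) (N : ℕ) {k k' : ℕ} (hk : k ≠ k') :
    IndepFun (sNormSq v N k) (sNormSq v N k') P := by
  have hdisj : Disjoint (range N ×ˢ {k}) (range N ×ˢ {k'}) :=
    Finset.disjoint_product.mpr (Or.inr (Finset.disjoint_singleton.mpr hk))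
  have hcol (j : ℕ) : Measurable fun x : (range N ×ˢ {j} : Finset (ℕ × ℕ)) → ℂ =>
      (∑ i : Fin N, ‖x ⟨(i, j), by simp⟩‖ ^ 2) / N := by
    fun_prop
  have := (hindep.indepFun_finset _ _ hdisj fun q => hmeas q.1 q.2).comp (hcol k) (hcol k')
  convert this using 1 <;> funext ω <;> simp [sNormSq_eq]

theorem memLp_sNormSq_sub_one {p : ℝ≥0∞} (hL : ∀ i k, MemLp (fun ω => ‖v i k ω‖ ^ 2 - 1) p P)
    {N : ℕ} (hN : N ≠ 0) (k : ℕ) : MemLp (fun ω => sNormSq v N k ω - 1) p P := by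
  simp_rw [sNormSq_sub_one_eq hN, div_eq_mul_inv]
  exact (memLp_finsetSum _ fun (i : Fin N) _ => hL i k).mul_const _

variable [IsProbabilityMeasure P]

theorem integral_sNormSq_sub_one_sq (hmeas : ∀ i j, Measurable (v i j))
    (hindep : iIndepFun (fun q : ℕ × ℕ => v q.1 q.2) P)
    (hL2 : ∀ i k, MemLp (fun ω => ‖v i k ω‖ ^ 2 - 1) 2 P)
    (h1 : ∀ i k, ∫ ω, ‖v i k ω‖ ^ 2 - 1 ∂P = 0) {σ2 : ℝ}
    (h2 : ∀ i k, ∫ ω, (‖v i k ω‖ ^ 2 - 1) ^ 2 ∂P = σ2) {N : ℕ} (hN : N ≠ 0) (k : ℕ) :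
    ∫ ω, (sNormSq v N k ω - 1) ^ 2 ∂P = σ2 / N := by
  have hcol : iIndepFun (fun (i : Fin N) ω => ‖v i k ω‖ ^ 2 - 1) P :=
    iIndepFun_column hindep k (g := fun z => ‖z‖ ^ 2 - 1) (by fun_prop)
  simp_rw [sNormSq_sub_one_eq hN, div_pow]
  rw [integral_div, integral_sum_sq_of_iIndepFun hcol (fun i => by fun_prop) (fun i => hL2 i k)
    (fun i => h1 i k) (fun i => h2 i k)]
  simp only [Finset.card_univ, Fintype.card_fin]
  field_simp

theorem integral_sNormSq_sub_one_pow_four_le (hmeas : ∀ i j, Measurable (v i j))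
    (hindep : iIndepFun (fun q : ℕ × ℕ => v q.1 q.2) P)
    (hL4 : ∀ i k, MemLp (fun ω => ‖v i k ω‖ ^ 2 - 1) 4 P)
    (h1 : ∀ i k, ∫ ω, ‖v i k ω‖ ^ 2 - 1 ∂P = 0) {σ2 m4 : ℝ}
    (h2 : ∀ i k, ∫ ω, (‖v i k ω‖ ^ 2 - 1) ^ 2 ∂P = σ2)
    (h4 : ∀ i k, ∫ ω, (‖v i k ω‖ ^ 2 - 1) ^ 4 ∂P = m4) {N : ℕ} (hN : N ≠ 0) (k : ℕ) :
    ∫ ω, (sNormSq v N k ω - 1) ^ 4 ∂P ≤ (m4 + 3 * σ2 ^ 2) / N ^ 2 := by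
  have hm4 : 0 ≤ m4 := h4 0 0 ▸ integral_nonneg fun ω => by positivity
  have hN1 : (1 : ℝ) ≤ N := by exact_mod_cast Nat.one_le_iff_ne_zero.mpr hN
  have hcol : iIndepFun (fun (i : Fin N) ω => ‖v i k ω‖ ^ 2 - 1) P :=
    iIndepFun_column hindep k (g := fun z => ‖z‖ ^ 2 - 1) (by fun_prop)
  simp_rw [sNormSq_sub_one_eq hN, div_pow]
  rw [integral_div, integral_sum_pow_four_of_iIndepFun hcol (fun i => by fun_prop)
    (fun i => hL4 i k) (fun i => h1 i k) (fun i => h2 i k) (fun i => h4 i k)]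
  simp only [Finset.card_univ, Fintype.card_fin]
  calc (N * m4 + 3 * N * (N - 1) * σ2 ^ 2) / (N : ℝ) ^ 4
      ≤ N ^ 2 * (m4 + 3 * σ2 ^ 2) / (N : ℝ) ^ 4 := by
        gcongr
        nlinarith [sq_nonneg σ2, mul_nonneg (mul_nonneg (by positivity : (0 : ℝ) ≤ N)
          (sub_nonneg.mpr hN1)) hm4]
    _ = (m4 + 3 * σ2 ^ 2) / N ^ 2 := by field_simp

theorem integral_sum_mul_sNormSq_sub_one_sq (hmeas : ∀ i j, Measurable (v i j))
    (hindep : iIndepFun (fun q : ℕ × ℕ => v q.1 q.2) P)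
    (hL2 : ∀ i k, MemLp (fun ω => ‖v i k ω‖ ^ 2 - 1) 2 P)
    (h1 : ∀ i k, ∫ ω, ‖v i k ω‖ ^ 2 - 1 ∂P = 0) {σ2 : ℝ}
    (h2 : ∀ i k, ∫ ω, (‖v i k ω‖ ^ 2 - 1) ^ 2 ∂P = σ2) {N : ℕ} (hN : N ≠ 0)
    (w : ℕ → ℝ) (s : Finset ℕ) :
    ∫ ω, ∑ k ∈ s, w k * (sNormSq v N k ω - 1) ^ 2 ∂P = σ2 / N * ∑ k ∈ s, w k := by
  rw [integral_finsetSum _ fun k _ =>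
    (memLp_sNormSq_sub_one hL2 hN k).integrable_sq.const_mul (w k), Finset.mul_sum]
  refine Finset.sum_congr rfl fun k _ => ?_
  rw [integral_const_mul, integral_sNormSq_sub_one_sq hmeas hindep hL2 h1 h2 hN, mul_comm]

theorem variance_sum_mul_sNormSq_sub_one_sq_le (hmeas : ∀ i j, Measurable (v i j))
    (hindep : iIndepFun (fun q : ℕ × ℕ => v q.1 q.2) P)
    (hL4 : ∀ i k, MemLp (fun ω => ‖v i k ω‖ ^ 2 - 1) 4 P)
    (h1 : ∀ i k, ∫ ω, ‖v i k ω‖ ^ 2 - 1 ∂P = 0) {σ2 m4 : ℝ}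
    (h2 : ∀ i k, ∫ ω, (‖v i k ω‖ ^ 2 - 1) ^ 2 ∂P = σ2)
    (h4 : ∀ i k, ∫ ω, (‖v i k ω‖ ^ 2 - 1) ^ 4 ∂P = m4) {N : ℕ} (hN : N ≠ 0)
    (w : ℕ → ℝ) (s : Finset ℕ) {M : ℝ} (hw : ∀ k ∈ s, |w k| ≤ M) :
    variance (fun ω => ∑ k ∈ s, w k * (sNormSq v N k ω - 1) ^ 2) P
      ≤ #s * M ^ 2 * ((m4 + 3 * σ2 ^ 2) / N ^ 2) := by
  have hL2 (k : ℕ) : MemLp (fun ω => (sNormSq v N k ω - 1) ^ 2) 2 P :=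
    (memLp_sNormSq_sub_one hL4 hN k).sq
  have hindepk : Set.Pairwise s fun k k' => IndepFun (fun ω => w k * (sNormSq v N k ω - 1) ^ 2)
      (fun ω => w k' * (sNormSq v N k' ω - 1) ^ 2) P := fun k _ k' _ hk =>
    (indepFun_sNormSq hmeas hindep N hk).comp (φ := fun x => w k * (x - 1) ^ 2)
      (ψ := fun x => w k' * (x - 1) ^ 2) (by fun_prop) (by fun_prop)
  rw [← Finset.sum_fn, IndepFun.variance_sum (fun k _ => (hL2 k).const_mul (w k)) hindepk]
  calc ∑ k ∈ s, variance (fun ω => w k * (sNormSq v N k ω - 1) ^ 2) P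
      ≤ ∑ k ∈ s, M ^ 2 * ((m4 + 3 * σ2 ^ 2) / N ^ 2) := by
        refine Finset.sum_le_sum fun k hk => ?_
        rw [variance_const_mul]
        have hw2 : w k ^ 2 ≤ M ^ 2 := by
          simpa only [sq_abs] using pow_le_pow_left₀ (abs_nonneg _) (hw k hk) 2
        have hvar : variance (fun ω => (sNormSq v N k ω - 1) ^ 2) P
            ≤ (m4 + 3 * σ2 ^ 2) / N ^ 2 := by
          refine (variance_le_expectation_sq (hL2 k).aestronglyMeasurable).trans ?_
          simpa only [Pi.pow_apply, ← pow_mul] using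
            integral_sNormSq_sub_one_pow_four_le hmeas hindep hL4 h1 h2 h4 hN k
        exact mul_le_mul hw2 hvar (variance_nonneg _ _) (sq_nonneg _)
    _ = #s * M ^ 2 * ((m4 + 3 * σ2 ^ 2) / N ^ 2) := by
        rw [Finset.sum_const, nsmul_eq_mul, mul_assoc]

theorem tendstoInMeasure_sum_mul_sNormSq_sub_one_sq (hmeas : ∀ i j, Measurable (v i j))
    (hindep : iIndepFun (fun q : ℕ × ℕ => v q.1 q.2) P)
    (hL4 : ∀ i k, MemLp (fun ω => ‖v i k ω‖ ^ 2 - 1) 4 P)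
    (h1 : ∀ i k, ∫ ω, ‖v i k ω‖ ^ 2 - 1 ∂P = 0) {σ2 m4 : ℝ}
    (h2 : ∀ i k, ∫ ω, (‖v i k ω‖ ^ 2 - 1) ^ 2 ∂P = σ2)
    (h4 : ∀ i k, ∫ ω, (‖v i k ω‖ ^ 2 - 1) ^ 4 ∂P = m4) {K : ℕ → ℕ} {c : ℝ} (hc : c ≠ 0)
    (hK : Tendsto (fun N : ℕ => (N : ℝ) / K N) atTop (𝓝 c)) {p : ℕ → ℕ → ℝ} {M : ℝ}
    (hp : ∀ N k, k < K N → |p N k| ≤ M) {m1 : ℝ}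
    (hm1 : Tendsto (fun N : ℕ => 1 / (K N : ℝ) * ∑ k ∈ range (K N), p N k) atTop (𝓝 m1)) :
    TendstoInMeasure P (fun N ω => ∑ k ∈ range (K N), p N k * (sNormSq v N k ω - 1) ^ 2)
      atTop (fun _ => σ2 * m1 / c) := by
  have hL2 (i k : ℕ) : MemLp (fun ω => ‖v i k ω‖ ^ 2 - 1) 2 P :=
    (hL4 i k).mono_exponent (by norm_num)
  refine tendstoInMeasure_const_of_tendsto_variance ((eventually_ne_atTop 0).mono fun N hN =>
    memLp_finsetSum _ fun k _ => (memLp_sNormSq_sub_one hL4 hN k).sq.const_mul _) ?_ ?_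
  · rw [mul_div_assoc]
    refine ((tendsto_sum_div_of_tendsto_average hc hK hm1).const_mul σ2).congr' ?_
    filter_upwards [eventually_ne_atTop 0] with N hN
    rw [integral_sum_mul_sNormSq_sub_one_sq hmeas hindep hL2 h1 h2 hN]
    ring
  · have hbound := (tendsto_div_sq_of_tendsto_div hc hK).const_mul (M ^ 2 * (m4 + 3 * σ2 ^ 2))
    rw [mul_zero] at hbound
    refine squeeze_zero' (Eventually.of_forall fun N => variance_nonneg _ _) ?_ hbound
    filter_upwards [eventually_ne_atTop 0] with N hN
    refine (variance_sum_mul_sNormSq_sub_one_sq_le hmeas hindep hL4 h1 h2 h4 hN (p N) _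
      fun k hk => hp N k (Finset.mem_range.mp hk)).trans_eq ?_
    rw [Finset.card_range]
    ring

end Model

theorem G1_limit_general
    {Ω : Type*} [MeasurableSpace Ω] (P : Measure Ω) [IsProbabilityMeasure P]
    (v : ℕ → ℕ → Ω → ℂ) (hmeas : ∀ i j, Measurable (v i j))
    (hindep : iIndepFun
      (fun p : ℕ × ℕ => v p.1 p.2) P)
    (hident : ∀ i j, IdentDistrib (v i j) (v 0 0) P P)
    (hvar : ∫ ω, ‖v 0 0 ω‖^2 ∂P = 1)
    (heighth : Integrable (fun ω => ‖v 0 0 ω‖^8) P)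
    (K : ℕ → ℕ) (c : ℝ) (hc : 0 < c)
    (hK : Tendsto (fun N : ℕ => (N : ℝ) / (K N : ℝ)) atTop (𝓝 c))
    (Mbar : ℝ) (p : ℕ → ℕ → ℝ)
    (hp : ∀ N k, k < K N → p N k ∈ Set.Icc (0 : ℝ) Mbar)
    (m1 : ℝ)
    (hm1 : Tendsto (fun N : ℕ => (1 / (K N : ℝ)) * ∑ k ∈ Finset.range (K N), p N k)
      atTop (𝓝 m1))
    (κ : ℝ) (hκ : κ = ∫ ω, ‖v 0 0 ω‖^4 ∂P) :
    TendstoInMeasure P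
      (fun N ω => ∑ k ∈ Finset.range (K N), p N k * (sNormSq v N k ω - 1)^2)
      atTop (fun _ => (κ - 1) * m1 / c) := by
  have hY (i k : ℕ) : IdentDistrib (fun ω => ‖v i k ω‖ ^ 2 - 1) (fun ω => ‖v 0 0 ω‖ ^ 2 - 1) P P :=
    (hident i k).comp (u := fun z => ‖z‖ ^ 2 - 1) (by fun_prop)
  have hnorm : MemLp (fun ω => ‖v 0 0 ω‖ ^ 2) 4 P :=
    (memLp_norm_sq_iff (hmeas 0 0).aestronglyMeasurable four_ne_zero).mpr heighth
  have hnorm2 : MemLp (fun ω => ‖v 0 0 ω‖ ^ 2) 2 P := hnorm.mono_exponent (by norm_num)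
  have hcentered : ∫ ω, (‖v 0 0 ω‖ ^ 2 - 1) ^ 2 ∂P = κ - 1 := by
    have := variance_eq_sub hnorm2
    rw [variance_eq_integral hnorm2.aemeasurable] at this
    simpa [hvar, hκ, ← pow_mul] using this
  exact tendstoInMeasure_sum_mul_sNormSq_sub_one_sq hmeas hindep
    (fun i k => (hY i k).memLp_iff.mpr (hnorm.sub (memLp_const 1)))
    (fun i k => (hY i k).integral_eq.trans <| by
      simp [integral_sub (hnorm2.integrable one_le_two) (integrable_const 1), hvar])
    (fun i k => ((hY i k).comp (measurable_id.pow_const 2)).integral_eq.trans hcentered)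
    (fun i k => ((hY i k).comp (measurable_id.pow_const 4)).integral_eq)
    hc.ne' hK (fun N k hk => (abs_of_nonneg (hp N k hk).1).le.trans (hp N k hk).2) hm1

/-- The limit of the term `G₁` of Section 5 of the paper:
`∑_k p_k (s_k* s_k − 1)² → (E|v₁₁|⁴ − 1) m₁ / c` in probability. -/
theorem G1_limit
    {Ω : Type*} [MeasurableSpace Ω] (P : Measure Ω) [IsProbabilityMeasure P]
    (v : ℕ → ℕ → Ω → ℂ) (hmeas : ∀ i j, Measurable (v i j))
    (hindep : iIndepFun
      (fun p : ℕ × ℕ => v p.1 p.2) P)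
    (hident : ∀ i j, IdentDistrib (v i j) (v 0 0) P P)
    (hmean : ∫ ω, v 0 0 ω ∂P = 0)
    (hvar : ∫ ω, ‖v 0 0 ω‖^2 ∂P = 1)
    (heighth : Integrable (fun ω => ‖v 0 0 ω‖^8) P)
    (K : ℕ → ℕ) (c : ℝ) (hc : 0 < c)
    (hK : Tendsto (fun N : ℕ => (N : ℝ) / (K N : ℝ)) atTop (𝓝 c))
    (Mbar : ℝ) (p : ℕ → ℕ → ℝ)
    (hp : ∀ N k, k < K N → p N k ∈ Set.Icc (0 : ℝ) Mbar)
    (m1 : ℝ)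
    (hm1 : Tendsto (fun N : ℕ => (1 / (K N : ℝ)) * ∑ k ∈ Finset.range (K N), p N k)
      atTop (𝓝 m1))
    (κ : ℝ) (hκ : κ = ∫ ω, ‖v 0 0 ω‖^4 ∂P) :
    TendstoInMeasure P
      (fun N ω => ∑ k ∈ Finset.range (K N), p N k * (sNormSq v N k ω - 1)^2)
      atTop (fun _ => (κ - 1) * m1 / c) :=
  G1_limit_general P v hmeas hindep hident hvar heighth K c hc hK Mbar p hp m1 hm1 κ hκ

end
end

section
/- Let c ∈ ℂ, let r ≥ 1 be an integer, and let 0 < ρ < 1. Then (1/(2πi)) ∮_{|w|=ρ} (c + (1−c)w)^r / ( w^{r+2} (1−w)^r ) dw = ∑_{j=0}^{r} binom(r,j) (1−c)^j c^{r−j} binom(2r−j, r−1), where the integral is over the circle of radius ρ centered at 0, traversed once counterclockwise. -/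
open Finset
open scoped BigOperators Real

noncomputable section

/-!
Expanding `(c + (1 - c) w)^r` binomially reduces the integral to the integrals
`∮ (w^(n+1) (1 - w)^i)⁻¹`, which are `2πi` times the coefficient `multichoose i n` of `w^n` in
`(1 - w)^(-i)`. These are computed by induction from the partial fraction identity
`1 = (1 - w) + w`, which reproduces the Pascal recurrence of `Nat.multichoose`.
-/

open Metric Complex

lemma one_sub_ne_zero_of_mem_closedBall {ρ : ℝ} (hρ : ρ < 1) {w : ℂ}
    (hw : w ∈ closedBall (0 : ℂ) ρ) : 1 - w ≠ 0 := by
  rw [sub_ne_zero]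
  rintro rfl
  simp only [mem_closedBall, dist_zero_right, norm_one] at hw
  linarith

lemma ne_zero_and_one_sub_ne_zero_of_mem_sphere {ρ : ℝ} (hρ0 : 0 < ρ) (hρ1 : ρ < 1) {w : ℂ}
    (hw : w ∈ sphere (0 : ℂ) ρ) : w ≠ 0 ∧ 1 - w ≠ 0 :=
  ⟨ne_zero_of_mem_sphere hρ0.ne' ⟨w, hw⟩,
    one_sub_ne_zero_of_mem_closedBall hρ1 (sphere_subset_closedBall hw)⟩

lemma inv_pow_mul_one_sub_pow_succ {w : ℂ} (hw0 : w ≠ 0) (hw1 : 1 - w ≠ 0) (n i : ℕ) :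
    (w ^ (n + 1) * (1 - w) ^ (i + 1))⁻¹
      = (w ^ (n + 1) * (1 - w) ^ i)⁻¹ + (w ^ n * (1 - w) ^ (i + 1))⁻¹ := by
  field_simp
  ring

lemma circleIntegrable_inv_pow_mul_one_sub_pow {ρ : ℝ} (hρ0 : 0 < ρ) (hρ1 : ρ < 1) (n i : ℕ) :
    CircleIntegrable (fun w : ℂ ↦ (w ^ n * (1 - w) ^ i)⁻¹) 0 ρ := by
  refine ContinuousOn.circleIntegrable hρ0.le (ContinuousOn.inv₀ (by fun_prop) fun w hw ↦ ?_)
  obtain ⟨hw0, hw1⟩ := ne_zero_and_one_sub_ne_zero_of_mem_sphere hρ0 hρ1 hw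
  exact mul_ne_zero (pow_ne_zero _ hw0) (pow_ne_zero _ hw1)

lemma circleIntegral_inv_one_sub_pow {ρ : ℝ} (hρ0 : 0 ≤ ρ) (hρ1 : ρ < 1) (i : ℕ) :
    (∮ w in C(0, ρ), ((1 - w) ^ i)⁻¹) = 0 := by
  have hdiff : DifferentiableOn ℂ (fun w : ℂ ↦ ((1 - w) ^ i)⁻¹) (closedBall 0 ρ) :=
    DifferentiableOn.inv (by fun_prop) fun w hw ↦
      pow_ne_zero _ (one_sub_ne_zero_of_mem_closedBall hρ1 hw)
  exact circleIntegral_eq_zero_of_differentiable_on_off_countable hρ0 Set.countable_empty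
    hdiff.continuousOn fun w hw ↦ hdiff.differentiableAt (closedBall_mem_nhds_of_mem hw.1)

lemma circleIntegral_inv_pow_succ {ρ : ℝ} (hρ0 : 0 < ρ) (n : ℕ) :
    (∮ w in C(0, ρ), (w ^ (n + 1))⁻¹) = 2 * π * I * Nat.multichoose 0 n := by
  cases n with
  | zero => simpa using circleIntegral.integral_sub_center_inv 0 hρ0.ne'
  | succ n =>
    have hzpow : (fun w : ℂ ↦ (w ^ (n + 2))⁻¹) = fun w ↦ (w - 0) ^ (-(n + 2 : ℕ) : ℤ) := by
      funext w
      rw [sub_zero, zpow_neg, zpow_natCast]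
    rw [hzpow, circleIntegral.integral_sub_zpow_of_ne (by omega)]
    simp

lemma circleIntegral_inv_pow_succ_mul_one_sub_pow {ρ : ℝ} (hρ0 : 0 < ρ) (hρ1 : ρ < 1)
    (n i : ℕ) :
    (∮ w in C(0, ρ), (w ^ (n + 1) * (1 - w) ^ i)⁻¹) = 2 * π * I * Nat.multichoose i n := by
  induction i generalizing n with
  | zero => simpa using circleIntegral_inv_pow_succ hρ0 n
  | succ i ihi =>
    have hsplit : ∀ n : ℕ, (∮ w in C(0, ρ), (w ^ (n + 1) * (1 - w) ^ (i + 1))⁻¹)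
        = (∮ w in C(0, ρ), (w ^ (n + 1) * (1 - w) ^ i)⁻¹)
          + ∮ w in C(0, ρ), (w ^ n * (1 - w) ^ (i + 1))⁻¹ := fun n ↦ by
      rw [← circleIntegral.integral_add (circleIntegrable_inv_pow_mul_one_sub_pow hρ0 hρ1 _ _)
        (circleIntegrable_inv_pow_mul_one_sub_pow hρ0 hρ1 _ _)]
      refine circleIntegral.integral_congr hρ0.le fun w hw ↦ ?_
      obtain ⟨hw0, hw1⟩ := ne_zero_and_one_sub_ne_zero_of_mem_sphere hρ0 hρ1 hw
      exact inv_pow_mul_one_sub_pow_succ hw0 hw1 n i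
    induction n with
    | zero =>
      rw [hsplit, ihi]
      simp only [pow_zero, one_mul, circleIntegral_inv_one_sub_pow hρ0.le hρ1,
        Nat.multichoose_zero_right, add_zero]
    | succ n ihn =>
      rw [hsplit, ihi, ihn, Nat.multichoose_succ_succ]
      push_cast
      ring

lemma multichoose_succ_sub_eq_choose {r j : ℕ} (hr : 1 ≤ r) (hj : j ≤ r) :
    Nat.multichoose r (r + 1 - j) = (2 * r - j).choose (r - 1) := by
  rw [Nat.multichoose_eq, show r + (r + 1 - j) - 1 = 2 * r - j by omega]
  exact Nat.choose_symm_of_eq_add (by omega)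

lemma add_mul_pow_div_eq_sum {w : ℂ} (hw0 : w ≠ 0) (hw1 : 1 - w ≠ 0) (a b : ℂ) (r k : ℕ) :
    (a + b * w) ^ r / (w ^ (r + 2) * (1 - w) ^ k)
      = ∑ j ∈ range (r + 1),
          (r.choose j : ℂ) * b ^ j * a ^ (r - j) * (w ^ (r + 1 - j + 1) * (1 - w) ^ k)⁻¹ := by
  rw [add_comm a, add_pow, sum_div]
  refine sum_congr rfl fun j hj ↦ ?_
  have hsplit : w ^ (r + 2) = w ^ j * w ^ (r + 1 - j + 1) := by
    rw [← pow_add]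
    congr 1
    have := mem_range.mp hj
    omega
  rw [hsplit, mul_pow]
  field_simp

/-- The residue computation for the contour integral `ν₁` in the proof of
formula (1.23) of the paper:
`(1/(2πi)) ∮_{|w|=ρ} (c+(1−c)w)^r /(w^{r+2}(1−w)^r) dw
  = ∑_{j=0}^r C(r,j)(1−c)^j c^{r−j} C(2r−j, r−1)`. -/
theorem contour_integral_nu_one (c : ℂ) (r : ℕ) (hr : 1 ≤ r) (ρ : ℝ)
    (hρ0 : 0 < ρ) (hρ1 : ρ < 1) :
    (2 * Real.pi * Complex.I)⁻¹
        * (∮ w in C(0, ρ), (c + (1 - c) * w)^r / (w^(r + 2) * (1 - w)^r))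
      = ∑ j ∈ Finset.range (r + 1),
          (r.choose j : ℂ) * (1 - c)^j * c^(r - j)
            * ((2 * r - j).choose (r - 1) : ℂ) := by
  have hexpand : Set.EqOn
      (fun w ↦ (c + (1 - c) * w) ^ r / (w ^ (r + 2) * (1 - w) ^ r))
      (fun w ↦ ∑ j ∈ range (r + 1),
        (r.choose j : ℂ) * (1 - c) ^ j * c ^ (r - j) * (w ^ (r + 1 - j + 1) * (1 - w) ^ r)⁻¹)
      (sphere 0 ρ) := fun w hw ↦
    let ⟨hw0, hw1⟩ := ne_zero_and_one_sub_ne_zero_of_mem_sphere hρ0 hρ1 hw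
    add_mul_pow_div_eq_sum hw0 hw1 c (1 - c) r r
  rw [circleIntegral.integral_congr hρ0.le hexpand, circleIntegral.integral_fun_sum, mul_sum]
  · refine sum_congr rfl fun j hj ↦ ?_
    rw [circleIntegral.integral_const_mul,
      circleIntegral_inv_pow_succ_mul_one_sub_pow hρ0 hρ1,
      multichoose_succ_sub_eq_choose hr (Nat.lt_succ_iff.mp (mem_range.mp hj))]
    field_simp [two_pi_I_ne_zero]
  · exact fun j _ ↦ (circleIntegrable_inv_pow_mul_one_sub_pow hρ0 hρ1 _ r).const_smul

end
end

section
/- Let c ∈ ℂ, let r ≥ 1 be an integer, and let 0 < ρ < 1. Then (1/(2πi)) ∮_{|w|=ρ} (c + (1−c)w)^r / ( w^{r+3} (1−w)^r ) dw = ∑_{j=0}^{r} binom(r,j) (1−c)^j c^{r−j} binom(2r+1−j, r−1), where the integral is over the circle of radius ρ centered at 0, traversed once counterclockwise. -/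
open Finset
open scoped Real

open Complex Metric Polynomial

/-!
Write `P(w) = (c + (1 - c) w)^r` and let `T` be the truncation below degree `r + 3` of the power
series `P(w) (1 - w)^(-r)`. Then `P = (1 - w)^r T + w^(r + 3) Q` for a polynomial `Q`, so the
integrand splits into the Laurent polynomial `T(w) / w^(r + 3)`, whose integral is `2πi` times the
coefficient of `w^(r + 2)` in `T`, and `Q(w) / (1 - w)^r`, which is holomorphic on the closed disc
and integrates to zero. That coefficient is read off the Cauchy product of the binomial expansion
of `P` with `(1 - w)^(-r) = ∑ₘ C(r - 1 + m, r - 1) wᵐ`.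
-/

theorem circleIntegral_eval_div_pow_succ (p : ℂ[X]) (n : ℕ) {R : ℝ} (hR : 0 < R) :
    (∮ z in C(0, R), p.eval z / z ^ (n + 1)) = 2 * π * I * p.coeff n := by
  have hterm : ∀ k : ℕ,
      CircleIntegrable (fun z => p.coeff k * z ^ ((k : ℤ) - (n + 1))) 0 R := fun k => by
    have h := (circleIntegrable_sub_zpow_iff (c := 0) (w := 0) (R := R)
      (n := (k : ℤ) - (n + 1))).2 (Or.inr (Or.inr (by simp [hR.ne, abs_of_pos hR])))
    simp only [sub_zero] at h
    exact h.const_mul (p.coeff k)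
  calc (∮ z in C(0, R), p.eval z / z ^ (n + 1))
      = ∮ z in C(0, R),
          ∑ k ∈ range (p.natDegree + 1), p.coeff k * z ^ ((k : ℤ) - (n + 1)) := by
        refine circleIntegral.integral_congr hR.le fun z hz => ?_
        have hz0 : z ≠ 0 := ne_zero_of_mem_sphere hR.ne' ⟨z, hz⟩
        rw [eval_eq_sum_range, sum_div]
        refine sum_congr rfl fun k _ => ?_
        rw [zpow_sub₀ hz0, mul_div_assoc]
        norm_cast
    _ = ∑ k ∈ range (p.natDegree + 1),
          p.coeff k * ∮ z in C(0, R), z ^ ((k : ℤ) - (n + 1)) := by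
        rw [circleIntegral.integral_fun_sum fun k _ => hterm k]
        simp only [circleIntegral.integral_const_mul]
    _ = p.coeff n * ∮ z in C(0, R), z ^ ((n : ℤ) - (n + 1)) := by
        refine sum_eq_single n (fun k _ hkn => ?_) fun hn => ?_
        · have hne : (k : ℤ) - (n + 1) ≠ -1 := by omega
          have h := circleIntegral.integral_sub_zpow_of_ne hne 0 0 R
          simp only [sub_zero] at h
          rw [h, mul_zero]
        · rw [coeff_eq_zero_of_natDegree_lt (by simpa using hn), zero_mul]
    _ = 2 * π * I * p.coeff n := by
        have h := circleIntegral.integral_sub_inv_of_mem_ball (mem_ball_self hR (x := (0 : ℂ)))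
        simp only [sub_zero] at h
        rw [show (n : ℤ) - (n + 1) = -1 by ring]
        simp only [zpow_neg_one, h, mul_comm]

theorem circleIntegral_eval_div_one_sub_pow_eq_zero (p : ℂ[X]) (r : ℕ) {R : ℝ} (hR0 : 0 ≤ R)
    (hR1 : R < 1) : (∮ z in C(0, R), p.eval z / (1 - z) ^ r) = 0 := by
  have hdiff : DifferentiableOn ℂ (fun z => p.eval z / (1 - z) ^ r) (ball 0 1) := by
    intro z hz
    have hz1 : (1 : ℂ) - z ≠ 0 := by
      rw [sub_ne_zero]; rintro rfl; simp at hz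
    have hden : DifferentiableAt ℂ (fun z : ℂ => (1 - z) ^ r) z := by fun_prop
    exact ((p.differentiable z).div hden (pow_ne_zero r hz1)).differentiableWithinAt
  exact (hdiff.diffContOnCl_ball (closedBall_subset_ball hR1)).circleIntegral_eq_zero hR0

theorem X_pow_dvd_sub_one_sub_X_pow_mul_trunc {A : Type*} [CommRing A] (p : A[X]) (r n : ℕ) :
    X ^ n ∣ p - (1 - X) ^ r *
      PowerSeries.trunc n ((p : PowerSeries A) * (PowerSeries.invOneSubPow A r).val) := by
  have hcancel : ((1 : PowerSeries A) - PowerSeries.X) ^ r *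
      ((p : PowerSeries A) * (PowerSeries.invOneSubPow A r).val) = (p : PowerSeries A) := by
    rw [← PowerSeries.invOneSubPow_inv_eq_one_sub_pow, mul_left_comm, Units.inv_val, mul_one]
  have htrunc : PowerSeries.trunc n ((p - (1 - X) ^ r *
      PowerSeries.trunc n ((p : PowerSeries A) * (PowerSeries.invOneSubPow A r).val) : A[X])
        : PowerSeries A) = 0 := by
    push_cast
    rw [PowerSeries.trunc_sub, PowerSeries.trunc_mul_trunc, hcancel, sub_self]
  rw [X_pow_dvd_iff]
  intro d hd
  have hd' := congrArg (·.coeff d) htrunc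
  rwa [PowerSeries.coeff_trunc, if_pos hd, Polynomial.coeff_coe, coeff_zero] at hd'

theorem circleIntegral_eval_div_pow_succ_mul_one_sub_pow (p : ℂ[X]) (n r : ℕ) {R : ℝ}
    (hR0 : 0 < R) (hR1 : R < 1) :
    (∮ z in C(0, R), p.eval z / (z ^ (n + 1) * (1 - z) ^ r)) =
      2 * π * I *
        PowerSeries.coeff n ((p : PowerSeries ℂ) * (PowerSeries.invOneSubPow ℂ r).val) := by
  set T := PowerSeries.trunc (n + 1) ((p : PowerSeries ℂ) * (PowerSeries.invOneSubPow ℂ r).val)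
  obtain ⟨Q, hQ⟩ := X_pow_dvd_sub_one_sub_X_pow_mul_trunc p r (n + 1)
  have hsphere : ∀ z ∈ sphere (0 : ℂ) R, z ≠ 0 ∧ 1 - z ≠ 0 := fun z hz => by
    rw [mem_sphere_zero_iff_norm] at hz
    refine ⟨ne_zero_of_norm_ne_zero (by linarith), sub_ne_zero.2 fun h => ?_⟩
    rw [← h, norm_one] at hz
    linarith
  have hsplit : Set.EqOn (fun z => p.eval z / (z ^ (n + 1) * (1 - z) ^ r))
      (fun z => T.eval z / z ^ (n + 1) + Q.eval z / (1 - z) ^ r) (sphere 0 R) := fun z hz => by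
    obtain ⟨hz0, hz1⟩ := hsphere z hz
    have hp := congrArg (eval z) hQ
    simp only [eval_sub, eval_mul, eval_pow, eval_one, eval_X] at hp
    field_simp
    linear_combination hp
  have hTint : CircleIntegrable (fun z => T.eval z / z ^ (n + 1)) 0 R :=
    (T.continuous.continuousOn.div (by fun_prop) fun z hz =>
      pow_ne_zero _ (hsphere z hz).1).circleIntegrable hR0.le
  have hQint : CircleIntegrable (fun z => Q.eval z / (1 - z) ^ r) 0 R :=
    (Q.continuous.continuousOn.div (by fun_prop) fun z hz =>
      pow_ne_zero _ (hsphere z hz).2).circleIntegrable hR0.le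
  rw [circleIntegral.integral_congr hR0.le hsplit, circleIntegral.integral_add hTint hQint,
    circleIntegral_eval_div_pow_succ _ _ hR0,
    circleIntegral_eval_div_one_sub_pow_eq_zero _ _ hR0.le hR1,
    add_zero, PowerSeries.coeff_trunc, if_pos (lt_add_one n)]

theorem coeff_C_add_C_mul_X_pow {A : Type*} [CommSemiring A] (a b : A) (r m : ℕ) :
    ((C a + C b * X) ^ r).coeff m = r.choose m * b ^ m * a ^ (r - m) := by
  have hterm : ∀ k, (C b * X) ^ k * C a ^ (r - k) * (r.choose k : A[X]) =
      C (r.choose k * b ^ k * a ^ (r - k)) * X ^ k := fun k => by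
    simp only [mul_pow, ← C_pow, ← C_eq_natCast, C_mul]; ring
  simp only [add_comm (C a), add_pow, hterm, finsetSum_coeff, coeff_C_mul_X_pow]
  rw [sum_ite_eq]
  split_ifs with hm
  · rfl
  · rw [Nat.choose_eq_zero_of_lt (by simpa using hm), Nat.cast_zero, zero_mul, zero_mul]

theorem coeff_C_add_C_mul_X_pow_mul_invOneSubPow {A : Type*} [CommRing A] (a b : A) {r n : ℕ}
    (hr : 0 < r) (hrn : r ≤ n) :
    PowerSeries.coeff n ((((C a + C b * X) ^ r : A[X]) : PowerSeries A) *
        (PowerSeries.invOneSubPow A r).val) =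
      ∑ j ∈ range (r + 1),
        r.choose j * b ^ j * a ^ (r - j) * (r - 1 + (n - j)).choose (r - 1) := by
  rw [PowerSeries.coeff_mul, Nat.sum_antidiagonal_eq_sum_range_succ_mk,
    PowerSeries.invOneSubPow_val_eq_mk_sub_one_add_choose_of_pos A r hr]
  refine (sum_subset (range_subset_range.2 (by omega)) fun j _ hj => ?_).symm.trans
    (sum_congr rfl fun j _ => ?_)
  · rw [coeff_coe, coeff_C_add_C_mul_X_pow, Nat.choose_eq_zero_of_lt (by simpa using hj)]
    simp
  · rw [coeff_coe, coeff_C_add_C_mul_X_pow, PowerSeries.coeff_mk]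

/-- The residue computation for the contour integral `ν₂` in the proof of
formula (1.23) of the paper:
`(1/(2πi)) ∮_{|w|=ρ} (c+(1−c)w)^r /(w^{r+3}(1−w)^r) dw
  = ∑_{j=0}^r C(r,j)(1−c)^j c^{r−j} C(2r+1−j, r−1)`. -/
theorem contour_integral_nu_two (c : ℂ) (r : ℕ) (hr : 1 ≤ r) (ρ : ℝ)
    (hρ0 : 0 < ρ) (hρ1 : ρ < 1) :
    (2 * Real.pi * Complex.I)⁻¹
        * (∮ w in C(0, ρ), (c + (1 - c) * w)^r / (w^(r + 3) * (1 - w)^r))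
      = ∑ j ∈ Finset.range (r + 1),
          (r.choose j : ℂ) * (1 - c)^j * c^(r - j)
            * ((2 * r + 1 - j).choose (r - 1) : ℂ) := by
  have hint := circleIntegral_eval_div_pow_succ_mul_one_sub_pow ((C c + C (1 - c) * X) ^ r)
    (r + 2) r hρ0 hρ1
  simp only [eval_pow, eval_add, eval_C, eval_mul, eval_X] at hint
  rw [hint, ← mul_assoc, inv_mul_cancel₀ two_pi_I_ne_zero, one_mul,
    coeff_C_add_C_mul_X_pow_mul_invOneSubPow _ _ hr (by omega)]
  refine sum_congr rfl fun j hj => ?_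
  rw [show r - 1 + (r + 2 - j) = 2 * r + 1 - j by grind]
end
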